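/- (Proposition 2) Let a ∈ (0,1), λ > 0, ρ > 0, and let g, g′ be integers with 1 ≤ g′ ≤ g. Then λ̄(g′) ≤ λ̄(g); that is, the maximum steady-state MSE λ̄(g) is a monotone increasing function of the block time-wise sounding interval g. -/
import Mathlib

/-- Minimum steady-state MSE along a sounded eigen-direction. -/
noncomputable def lamStar (a lam ρ : ℝ) (g : ℕ) : ℝ :=
  lam / ((1/2)*(1+lam*ρ) + Real.sqrt (((1/2)*(1+lam*ρ))^2 + (a^(2*g)/(1-a^(2*g)))*(lam*ρ)))

/-- The g-block Riccati map. -/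
noncomputable def riccatiMap (a lam ρ : ℝ) (g : ℕ) (x : ℝ) : ℝ :=
  (a^(2*g)*x + (1-a^(2*g))*lam) / (ρ*(a^(2*g)*x + (1-a^(2*g))*lam) + 1)

/-- Maximum steady-state MSE. -/
noncomputable def lamBar (a lam ρ : ℝ) (g : ℕ) : ℝ :=
  a^(2*(g-1)) * lamStar a lam ρ g + (1 - a^(2*(g-1))) * lam

lemma tpos (a : ℝ) (ha0 : 0 < a) (g : ℕ) : 0 < a^(2*g) := pow_pos ha0 _

lemma tlt1 (a : ℝ) (ha0 : 0 < a) (ha1 : a < 1) (g : ℕ) (hg : 1 ≤ g) :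
    a^(2*g) < 1 := by
  apply pow_lt_one₀ ha0.le ha1; omega

/-- denominator of lamStar -/
noncomputable def Dfun (a lam ρ : ℝ) (g : ℕ) : ℝ :=
  (1/2)*(1+lam*ρ) + Real.sqrt (((1/2)*(1+lam*ρ))^2 + (a^(2*g)/(1-a^(2*g)))*(lam*ρ))

lemma Dfun_ge_one (a lam ρ : ℝ) (ha0 : 0 < a) (ha1 : a < 1) (hlam : 0 < lam) (hρ : 0 < ρ)
    (g : ℕ) (hg : 1 ≤ g) : 1 ≤ Dfun a lam ρ g := by
  have ht := tpos a ha0 g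
  have ht1 := tlt1 a ha0 ha1 g hg
  have hc : (1/2:ℝ) ≤ (1/2)*(1+lam*ρ) := by nlinarith
  have hf : 0 ≤ (a^(2*g)/(1-a^(2*g)))*(lam*ρ) :=
    mul_nonneg (div_nonneg ht.le (by linarith)) (by positivity)
  have hs : (1/2)*(1+lam*ρ) ≤ Real.sqrt (((1/2)*(1+lam*ρ))^2 + (a^(2*g)/(1-a^(2*g)))*(lam*ρ)) := by
    have h := Real.sqrt_le_sqrt (show ((1/2)*(1+lam*ρ))^2 ≤ ((1/2)*(1+lam*ρ))^2 + (a^(2*g)/(1-a^(2*g)))*(lam*ρ) by linarith)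
    rwa [Real.sqrt_sq (by linarith)] at h
  unfold Dfun
  nlinarith [Real.sqrt_nonneg (((1/2)*(1+lam*ρ))^2 + (a^(2*g)/(1-a^(2*g)))*(lam*ρ))]

lemma Dfun_anti (a lam ρ : ℝ) (ha0 : 0 < a) (ha1 : a < 1) (hlam : 0 < lam) (hρ : 0 < ρ)
    (g g' : ℕ) (hg' : 1 ≤ g') (hgg : g' ≤ g) : Dfun a lam ρ g ≤ Dfun a lam ρ g' := by
  have ht := tpos a ha0 g
  have ht' := tpos a ha0 g'
  have ht1 := tlt1 a ha0 ha1 g (le_trans hg' hgg)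
  have ht1' := tlt1 a ha0 ha1 g' hg'
  have hle : a^(2*g) ≤ a^(2*g') := by
    apply pow_le_pow_of_le_one ha0.le ha1.le; omega
  have hfrac : a^(2*g)/(1-a^(2*g)) ≤ a^(2*g')/(1-a^(2*g')) := by
    rw [div_le_div_iff₀ (by linarith) (by linarith)]
    nlinarith
  unfold Dfun
  gcongr

lemma lamStar_mono (a lam ρ : ℝ) (ha0 : 0 < a) (ha1 : a < 1) (hlam : 0 < lam) (hρ : 0 < ρ)
    (g g' : ℕ) (hg' : 1 ≤ g') (hgg : g' ≤ g) :
    lamStar a lam ρ g' ≤ lamStar a lam ρ g := by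
  have h1 := Dfun_ge_one a lam ρ ha0 ha1 hlam hρ g (le_trans hg' hgg)
  have h2 := Dfun_anti a lam ρ ha0 ha1 hlam hρ g g' hg' hgg
  show lam / Dfun a lam ρ g' ≤ lam / Dfun a lam ρ g
  gcongr

lemma lamStar_le (a lam ρ : ℝ) (ha0 : 0 < a) (ha1 : a < 1) (hlam : 0 < lam) (hρ : 0 < ρ)
    (g : ℕ) (hg : 1 ≤ g) : lamStar a lam ρ g ≤ lam := by
  have h1 := Dfun_ge_one a lam ρ ha0 ha1 hlam hρ g hg
  show lam / Dfun a lam ρ g ≤ lam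
  exact div_le_self hlam.le h1

/-- (Proposition 2) The maximum steady-state MSE λ̄(g) is monotone increasing in g. -/
theorem lamBar_monotone
    (a lam ρ : ℝ) (ha0 : 0 < a) (ha1 : a < 1) (hlam : 0 < lam) (hρ : 0 < ρ)
    (g g' : ℕ) (hg' : 1 ≤ g') (hgg : g' ≤ g) :
    lamBar a lam ρ g' ≤ lamBar a lam ρ g := by
  have hg : 1 ≤ g := le_trans hg' hgg
  have hmono := lamStar_mono a lam ρ ha0 ha1 hlam hρ g g' hg' hgg
  have hle := lamStar_le a lam ρ ha0 ha1 hlam hρ g hg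
  have hA : a^(2*(g-1)) ≤ a^(2*(g'-1)) := by
    apply pow_le_pow_of_le_one ha0.le ha1.le; omega
  have hA0 : (0:ℝ) ≤ a^(2*(g'-1)) := by positivity
  have key : a^(2*(g-1)) * (lam - lamStar a lam ρ g)
      ≤ a^(2*(g'-1)) * (lam - lamStar a lam ρ g') := by
    apply mul_le_mul hA (by linarith) (by linarith) hA0
  unfold lamBar
  nlinarith [key]
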